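/- Let A be a commutative unital K-algebra, I an ideal, and * = Σ ν^r C_r a star product on A[[ν]] that is adapted to I up to order r, i.e. C_s(f,g) ∈ I for all f ∈ A, g ∈ I and 0 ≤ s ≤ r. For f ∈ A and g ∈ I write B_{r+1}(f,g) := C_{r+1}(f,g) mod I ∈ A/I, and B⁻_{r+1}(g_1,g_2) := B_{r+1}(g_1,g_2) − B_{r+1}(g_2,g_1) for g_1, g_2 ∈ I. Then for all f ∈ A and g, g_1, g_2, g_3 ∈ I: (i) (f mod I)·B_{r+1}(f_2,g) − B_{r+1}(f f_2, g) + B_{r+1}(f, f_2 g) = 0 for any f_2 ∈ A; (ii) B⁻_{r+1}(f g_1, g_2) = B⁻_{r+1}(g_1, f g_2) = (f mod I)·B⁻_{r+1}(g_1,g_2); (iii) B⁻_{r+1}(g_1 g_2, g_3) = 0. -/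

import Mathlib

open Finset PowerSeries

/-- A formal deformation (star product) of a commutative unital `K`-algebra `A`. -/
structure StarProd (K A : Type*) [Field K] [CommRing A] [Algebra K A] where
  C : ℕ → A →ₗ[K] A →ₗ[K] A
  C_zero : ∀ f g : A, C 0 f g = f * g
  C_one_left : ∀ r : ℕ, 0 < r → ∀ f : A, C r 1 f = 0
  C_one_right : ∀ r : ℕ, 0 < r → ∀ f : A, C r f 1 = 0
  assoc : ∀ (t : ℕ) (f g h : A),
    ∑ p ∈ Finset.HasAntidiagonal.antidiagonal t, C p.1 (C p.2 f g) h
      = ∑ p ∈ Finset.HasAntidiagonal.antidiagonal t, C p.1 f (C p.2 g h)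

namespace StarProd

variable {K A : Type*} [Field K] [CommRing A] [Algebra K A]

/-- The induced `K[[ν]]`-bilinear multiplication `f * g = ∑ ν^r C_r(f,g)` on `A[[ν]]`. -/
noncomputable def mul (D : StarProd K A) (f g : PowerSeries A) : PowerSeries A :=
  PowerSeries.mk fun t =>
    ∑ p ∈ Finset.HasAntidiagonal.antidiagonal t, ∑ q ∈ Finset.HasAntidiagonal.antidiagonal p.2,
      D.C p.1 (PowerSeries.coeff (R := A) q.1 f) (PowerSeries.coeff (R := A) q.2 g)

end StarProd

/-!
Reduce the associativity identity of `*` at order `r + 1` with third argument `h ∈ I` modulo `I`.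
Every term `C_a(C_b(f,g),h)` with `a ≤ r` and every term `C_a(f,C_b(g,h))` with `a, b ≤ r`
lies in `I`, so only `C_{r+1}(fg,h) = C_{r+1}(f,gh) + f·C_{r+1}(g,h)` survives: `B` is a
Hochschild cocycle in the first two slots. Parts (ii) and (iii) follow by applying this identity
to products of elements of `I`, where the term `f·C_{r+1}(g,h)` vanishes once `f ∈ I`.
-/

namespace StarProd

variable {K A : Type*} [Field K] [CommRing A] [Algebra K A]

def IsAdapted (D : StarProd K A) (I : Ideal A) (r : ℕ) : Prop :=
  ∀ s ≤ r, ∀ f g : A, g ∈ I → D.C s f g ∈ I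

namespace IsAdapted

variable {D : StarProd K A} {I : Ideal A} {r : ℕ}

theorem mk_C_eq_zero (hD : D.IsAdapted I r) {s : ℕ} (hs : s ≤ r) (f : A) {g : A}
    (hg : g ∈ I) : Ideal.Quotient.mk I (D.C s f g) = 0 :=
  Ideal.Quotient.eq_zero_iff_mem.mpr (hD s hs f g hg)

theorem mk_assoc_lhs (hD : D.IsAdapted I r) (f g : A) {h : A} (hh : h ∈ I) :
    Ideal.Quotient.mk I (∑ p ∈ antidiagonal (r + 1), D.C p.1 (D.C p.2 f g) h)
      = Ideal.Quotient.mk I (D.C (r + 1) (f * g) h) := by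
  rw [Nat.sum_antidiagonal_succ', map_add, D.C_zero, map_sum, add_eq_left]
  exact sum_eq_zero fun p hp => hD.mk_C_eq_zero (HasAntidiagonal.antidiagonal.fst_le hp) _ hh

theorem mk_assoc_rhs (hD : D.IsAdapted I r) (f g : A) {h : A} (hh : h ∈ I) :
    Ideal.Quotient.mk I (∑ p ∈ antidiagonal (r + 1), D.C p.1 f (D.C p.2 g h))
      = Ideal.Quotient.mk I f * Ideal.Quotient.mk I (D.C (r + 1) g h)
        + Ideal.Quotient.mk I (D.C (r + 1) f (g * h)) := by
  rw [Nat.sum_antidiagonal_succ, map_add, D.C_zero, map_mul, map_sum,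
    sum_eq_single_of_mem (r, 0) (by simp), D.C_zero]
  rintro ⟨a, b⟩ hab hne
  have ha : a < r := by grind [HasAntidiagonal.mem_antidiagonal]
  exact hD.mk_C_eq_zero ha _ (hD b (HasAntidiagonal.antidiagonal.snd_le hab) g h hh)

theorem mk_C_succ_mul_left (hD : D.IsAdapted I r) (f g : A) {h : A} (hh : h ∈ I) :
    Ideal.Quotient.mk I (D.C (r + 1) (f * g) h)
      = Ideal.Quotient.mk I (D.C (r + 1) f (g * h))
        + Ideal.Quotient.mk I f * Ideal.Quotient.mk I (D.C (r + 1) g h) := by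
  rw [← hD.mk_assoc_lhs f g hh, D.assoc, hD.mk_assoc_rhs f g hh, add_comm]

theorem mk_C_succ_mul_left_of_mem (hD : D.IsAdapted I r) (f : A) {g h : A} (hg : g ∈ I)
    (hh : h ∈ I) :
    Ideal.Quotient.mk I (D.C (r + 1) (f * g) h) = Ideal.Quotient.mk I (D.C (r + 1) g (f * h)) := by
  rw [mul_comm, hD.mk_C_succ_mul_left g f hh, Ideal.Quotient.eq_zero_iff_mem.mpr hg, zero_mul,
    add_zero]

end IsAdapted

end StarProd

theorem statement14_general {K A : Type*} [Field K] [CommRing A] [Algebra K A]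
    (D : StarProd K A) (I : Ideal A) (r : ℕ)
    (hadapt : ∀ s ≤ r, ∀ f g : A, g ∈ I → D.C s f g ∈ I) :
    (∀ f f₂ g : A, g ∈ I →
      Ideal.Quotient.mk I f * Ideal.Quotient.mk I (D.C (r+1) f₂ g)
        - Ideal.Quotient.mk I (D.C (r+1) (f * f₂) g)
        + Ideal.Quotient.mk I (D.C (r+1) f (f₂ * g)) = 0) ∧
    (∀ f g₁ g₂ : A, g₁ ∈ I → g₂ ∈ I →
      (Ideal.Quotient.mk I (D.C (r+1) (f * g₁) g₂) - Ideal.Quotient.mk I (D.C (r+1) g₂ (f * g₁))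
          = Ideal.Quotient.mk I (D.C (r+1) g₁ (f * g₂))
            - Ideal.Quotient.mk I (D.C (r+1) (f * g₂) g₁)) ∧
      (Ideal.Quotient.mk I (D.C (r+1) g₁ (f * g₂)) - Ideal.Quotient.mk I (D.C (r+1) (f * g₂) g₁)
          = Ideal.Quotient.mk I f *
            (Ideal.Quotient.mk I (D.C (r+1) g₁ g₂) - Ideal.Quotient.mk I (D.C (r+1) g₂ g₁)))) ∧
    (∀ g₁ g₂ g₃ : A, g₁ ∈ I → g₂ ∈ I → g₃ ∈ I →
      Ideal.Quotient.mk I (D.C (r+1) (g₁ * g₂) g₃)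
        - Ideal.Quotient.mk I (D.C (r+1) g₃ (g₁ * g₂)) = 0) := by
  have hD : D.IsAdapted I r := hadapt
  refine ⟨fun f f₂ g hg => ?_, fun f g₁ g₂ hg₁ hg₂ => ⟨?_, ?_⟩, fun g₁ g₂ g₃ hg₁ hg₂ hg₃ => ?_⟩
  · rw [hD.mk_C_succ_mul_left f f₂ hg]
    ring
  · rw [hD.mk_C_succ_mul_left_of_mem f hg₁ hg₂, hD.mk_C_succ_mul_left_of_mem f hg₂ hg₁]
  · rw [← hD.mk_C_succ_mul_left_of_mem f hg₁ hg₂, hD.mk_C_succ_mul_left f g₁ hg₂,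
      hD.mk_C_succ_mul_left f g₂ hg₁, mul_comm g₂ g₁]
    ring
  · -- move the three factors around the cycle `(g₁g₂, g₃) → (g₂, g₁g₃) → (g₃g₂, g₁) → (g₃, g₁g₂)`
    rw [hD.mk_C_succ_mul_left_of_mem g₁ hg₂ hg₃, ← mul_comm g₃ g₁,
      ← hD.mk_C_succ_mul_left_of_mem g₃ hg₂ hg₁, mul_comm g₃ g₂,
      hD.mk_C_succ_mul_left_of_mem g₂ hg₃ hg₁, mul_comm g₂ g₁, sub_self]

/-- First-obstruction identities: let `* = Σ ν^s C_s` be a star product on `A[[ν]]`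
adapted to the ideal `I` up to order `r` (`C_s(A,I) ⊆ I` for `s ≤ r`). Writing
`B(f,g) = C_{r+1}(f,g) mod I ∈ A/I` and `B⁻(g₁,g₂) = B(g₁,g₂) − B(g₂,g₁)`, then for all
`f, f₂ ∈ A` and `g, g₁, g₂, g₃ ∈ I`:
(i)  `(f mod I)·B(f₂,g) − B(f·f₂,g) + B(f,f₂·g) = 0`;
(ii) `B⁻(f·g₁,g₂) = B⁻(g₁,f·g₂) = (f mod I)·B⁻(g₁,g₂)`;
(iii) `B⁻(g₁·g₂,g₃) = 0`. -/
theorem statement14 {K A : Type*} [Field K] [CharZero K] [CommRing A] [Algebra K A]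
    (D : StarProd K A) (I : Ideal A) (r : ℕ)
    (hadapt : ∀ s ≤ r, ∀ f g : A, g ∈ I → D.C s f g ∈ I) :
    (∀ f f₂ g : A, g ∈ I →
      Ideal.Quotient.mk I f * Ideal.Quotient.mk I (D.C (r+1) f₂ g)
        - Ideal.Quotient.mk I (D.C (r+1) (f * f₂) g)
        + Ideal.Quotient.mk I (D.C (r+1) f (f₂ * g)) = 0) ∧
    (∀ f g₁ g₂ : A, g₁ ∈ I → g₂ ∈ I →
      (Ideal.Quotient.mk I (D.C (r+1) (f * g₁) g₂) - Ideal.Quotient.mk I (D.C (r+1) g₂ (f * g₁))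
          = Ideal.Quotient.mk I (D.C (r+1) g₁ (f * g₂))
            - Ideal.Quotient.mk I (D.C (r+1) (f * g₂) g₁)) ∧
      (Ideal.Quotient.mk I (D.C (r+1) g₁ (f * g₂)) - Ideal.Quotient.mk I (D.C (r+1) (f * g₂) g₁)
          = Ideal.Quotient.mk I f *
            (Ideal.Quotient.mk I (D.C (r+1) g₁ g₂) - Ideal.Quotient.mk I (D.C (r+1) g₂ g₁)))) ∧
    (∀ g₁ g₂ g₃ : A, g₁ ∈ I → g₂ ∈ I → g₃ ∈ I →
      Ideal.Quotient.mk I (D.C (r+1) (g₁ * g₂) g₃)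
        - Ideal.Quotient.mk I (D.C (r+1) g₃ (g₁ * g₂)) = 0) :=
  statement14_general D I r hadapt
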